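/- None of the following classes is closed under complementation: 1ReachU ≠ co-1ReachU, 1ReachFewU ≠ co-1ReachFewU, 1FewU ≠ co-1FewU, and 1Few ≠ co-1Few. -/

import Mathlib

/-! ## One-way nondeterministic finite automata -/

structure OneNFA (α : Type) : Type 1 where
  Q : Type
  [finQ : Fintype Q]
  start : Q
  next : Q → α → Set Q
  next_nonempty : ∀ q a, (next q a).Nonempty
  acc : Set Q

attribute [instance] OneNFA.finQ

namespace OneNFA

variable {α : Type}

/-- The state complexity (number of inner states). -/
def sc (M : OneNFA α) : ℕ := Fintype.card M.Q

/-- `p` is a computation path of `M` on input `x`. -/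
def IsPath (M : OneNFA α) (x : List α) (p : Fin (x.length + 1) → M.Q) : Prop :=
  p 0 = M.start ∧ ∀ i : Fin x.length, p i.succ ∈ M.next (p i.castSucc) (x.get i)

/-- `p` is an accepting computation path of `M` on input `x`. -/
def IsAccPath (M : OneNFA α) (x : List α) (p : Fin (x.length + 1) → M.Q) : Prop :=
  M.IsPath x p ∧ p (Fin.last x.length) ∈ M.acc

def Accepts (M : OneNFA α) (x : List α) : Prop := ∃ p, M.IsAccPath x p

/-- `M` is a 1dfa: every transition set is a singleton. -/
def Deterministic (M : OneNFA α) : Prop := ∀ q a, ∃ q', M.next q a = {q'}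

end OneNFA

/-! ## Families of promise problems -/

structure PromiseFamily (α : Type) where
  pos : ℕ → Set (List α)
  neg : ℕ → Set (List α)
  disj : ∀ n, Disjoint (pos n) (neg n)

namespace PromiseFamily

def valid {α : Type} (L : PromiseFamily α) (n : ℕ) : Set (List α) := L.pos n ∪ L.neg n

def co {α : Type} (L : PromiseFamily α) : PromiseFamily α :=
  ⟨L.neg, L.pos, fun n => (L.disj n).symm⟩

end PromiseFamily

/-- A family of promise problems over some finite alphabet. -/
structure Family : Type 1 where
  alph : Type
  [finA : Fintype alph]
  prob : PromiseFamily alph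

attribute [instance] Family.finA

def Family.co (F : Family) : Family := { alph := F.alph, prob := F.prob.co }

/-! ## One-way machine families -/

def Solves1 {α : Type} (M : ℕ → OneNFA α) (L : PromiseFamily α) : Prop :=
  ∀ n, (∀ x ∈ L.pos n, (M n).Accepts x) ∧ (∀ x ∈ L.neg n, ¬ (M n).Accepts x)

def PolySize1 {α : Type} (M : ℕ → OneNFA α) : Prop :=
  ∃ p : Polynomial ℕ, ∀ n, (M n).sc ≤ p.eval n

def Unambiguous1 {α : Type} (M : ℕ → OneNFA α) (L : PromiseFamily α) : Prop :=
  ∀ n, ∀ x ∈ L.valid n, {p | (M n).IsAccPath x p}.Subsingleton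

def AcceptFew1 {α : Type} (M : ℕ → OneNFA α) (L : PromiseFamily α) : Prop :=
  ∃ P : MvPolynomial (Fin 2) ℕ, ∀ n, ∀ x ∈ L.valid n,
    {p | (M n).IsAccPath x p}.ncard ≤ MvPolynomial.eval ![n, x.length] P

def WeaklyUnambiguous1 {α : Type} (M : ℕ → OneNFA α) (L : PromiseFamily α) : Prop :=
  ∀ n, ∀ x ∈ L.valid n, ∀ q : (M n).Q,
    {p | (M n).IsAccPath x p ∧ p (Fin.last x.length) = q}.Subsingleton

def ReachUnambiguous1 {α : Type} (M : ℕ → OneNFA α) (L : PromiseFamily α) : Prop :=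
  ∀ n, ∀ x ∈ L.valid n, ∀ i ≤ x.length, ∀ q : (M n).Q,
    {p : Fin ((x.take i).length + 1) → (M n).Q |
      (M n).IsPath (x.take i) p ∧ p (Fin.last (x.take i).length) = q}.Subsingleton

def ReachFew1 {α : Type} (M : ℕ → OneNFA α) (L : PromiseFamily α) : Prop :=
  ∃ P : MvPolynomial (Fin 2) ℕ, ∀ n, ∀ x ∈ L.valid n, ∀ i ≤ x.length, ∀ q : (M n).Q,
    {p : Fin ((x.take i).length + 1) → (M n).Q |
      (M n).IsPath (x.take i) p ∧ p (Fin.last (x.take i).length) = q}.ncard ≤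
      MvPolynomial.eval ![n, x.length] P

/-! ## One-way nonuniform state complexity classes -/

def oneN : Set Family :=
  {F | ∃ M : ℕ → OneNFA F.alph, PolySize1 M ∧ Solves1 M F.prob}

def oneD : Set Family :=
  {F | ∃ M : ℕ → OneNFA F.alph, PolySize1 M ∧ (∀ n, (M n).Deterministic) ∧ Solves1 M F.prob}

def oneU : Set Family :=
  {F | ∃ M : ℕ → OneNFA F.alph, PolySize1 M ∧ Unambiguous1 M F.prob ∧ Solves1 M F.prob}

def oneFew : Set Family :=
  {F | ∃ M : ℕ → OneNFA F.alph, PolySize1 M ∧ AcceptFew1 M F.prob ∧ Solves1 M F.prob}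

def oneFewU : Set Family :=
  {F | ∃ M : ℕ → OneNFA F.alph, PolySize1 M ∧ AcceptFew1 M F.prob ∧
        WeaklyUnambiguous1 M F.prob ∧ Solves1 M F.prob}

def oneReachU : Set Family :=
  {F | ∃ M : ℕ → OneNFA F.alph, PolySize1 M ∧ AcceptFew1 M F.prob ∧
        ReachUnambiguous1 M F.prob ∧ Solves1 M F.prob}

def oneReachFew : Set Family :=
  {F | ∃ M : ℕ → OneNFA F.alph, PolySize1 M ∧ AcceptFew1 M F.prob ∧
        ReachFew1 M F.prob ∧ Solves1 M F.prob}

def oneReachFewU : Set Family :=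
  {F | ∃ M : ℕ → OneNFA F.alph, PolySize1 M ∧ AcceptFew1 M F.prob ∧
        ReachFew1 M F.prob ∧ WeaklyUnambiguous1 M F.prob ∧ Solves1 M F.prob}

/-- The complement class `co-C`. -/
def coC (C : Set Family) : Set Family := {F | F.co ∈ C}
/-! ## Two-way nondeterministic finite automata -/

/-- A tape symbol: either an input symbol, the left endmarker `Sum.inr false`,
or the right endmarker `Sum.inr true`. -/
def TapeSym (α : Type) : Type := α ⊕ Bool

/-- The symbol held in cell `i` of the tape containing `▷x◁`. -/
def tapeAt {α : Type} (x : List α) (i : ℕ) : TapeSym α :=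
  if h0 : i = 0 then Sum.inr false
  else if h : i ≤ x.length then Sum.inl (x.get ⟨i - 1, by omega⟩)
  else Sum.inr true

structure TwoNFA (α : Type) : Type 1 where
  Q : Type
  [finQ : Fintype Q]
  start : Q
  acc : Set Q
  rej : Set Q
  acc_rej_disj : Disjoint acc rej
  next : Q → TapeSym α → Set (Q × ℤ)
  next_dir : ∀ q a t, t ∈ next q a → t.2 = -1 ∨ t.2 = 0 ∨ t.2 = 1

attribute [instance] TwoNFA.finQ

namespace TwoNFA

variable {α : Type}

def sc (M : TwoNFA α) : ℕ := Fintype.card M.Q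

def Halting (M : TwoNFA α) (q : M.Q) : Prop := q ∈ M.acc ∨ q ∈ M.rej

/-- Configuration `c` yields configuration `c'` in one step on input `x`. -/
def Yields (M : TwoNFA α) (x : List α) (c c' : M.Q × ℕ) : Prop :=
  ¬ M.Halting c.1 ∧ c.2 ≤ x.length + 1 ∧ c'.2 ≤ x.length + 1 ∧
    ∃ d : ℤ, (c'.1, d) ∈ M.next c.1 (tapeAt x c.2) ∧ (c'.2 : ℤ) = (c.2 : ℤ) + d

/-- A partial computation path of length `k` of `M` on `x`. -/
def IsPartialPath (M : TwoNFA α) (x : List α) (k : ℕ) (p : Fin (k + 1) → M.Q × ℕ) : Prop :=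
  p 0 = (M.start, 0) ∧ ∀ i : Fin k, M.Yields x (p i.castSucc) (p i.succ)

/-- A (full) computation path: the final configuration is the only halting one. -/
def IsCompPath (M : TwoNFA α) (x : List α) (k : ℕ) (p : Fin (k + 1) → M.Q × ℕ) : Prop :=
  M.IsPartialPath x k p ∧ ∀ i : Fin (k + 1), (M.Halting (p i).1 ↔ i = Fin.last k)

def IsAccPath (M : TwoNFA α) (x : List α) (k : ℕ) (p : Fin (k + 1) → M.Q × ℕ) : Prop :=
  M.IsCompPath x k p ∧ (p (Fin.last k)).1 ∈ M.acc

def Accepts (M : TwoNFA α) (x : List α) : Prop := ∃ k p, M.IsAccPath x k p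

def Deterministic (M : TwoNFA α) : Prop := ∀ q a, ∃ t, M.next q a = {t}

/-- The set of accepting computation paths of `M` on `x`. -/
def accPaths (M : TwoNFA α) (x : List α) : Set ((k : ℕ) × (Fin (k + 1) → M.Q × ℕ)) :=
  {kp | M.IsAccPath x kp.1 kp.2}

/-- The set of computation paths of `M` on `x` ending at configuration `conf`. -/
def compPathsTo (M : TwoNFA α) (x : List α) (conf : M.Q × ℕ) :
    Set ((k : ℕ) × (Fin (k + 1) → M.Q × ℕ)) :=
  {kp | M.IsCompPath x kp.1 kp.2 ∧ kp.2 (Fin.last kp.1) = conf}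

/-- The set of partial computation paths of `M` on `x` ending at configuration `conf`. -/
def partialPathsTo (M : TwoNFA α) (x : List α) (conf : M.Q × ℕ) :
    Set ((k : ℕ) × (Fin (k + 1) → M.Q × ℕ)) :=
  {kp | M.IsPartialPath x kp.1 kp.2 ∧ kp.2 (Fin.last kp.1) = conf}

end TwoNFA

/-! ## Two-way machine families -/

def Solves2 {α : Type} (M : ℕ → TwoNFA α) (L : PromiseFamily α) : Prop :=
  ∀ n, (∀ x ∈ L.pos n, (M n).Accepts x) ∧ (∀ x ∈ L.neg n, ¬ (M n).Accepts x)

def PolySize2 {α : Type} (M : ℕ → TwoNFA α) : Prop :=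
  ∃ p : Polynomial ℕ, ∀ n, (M n).sc ≤ p.eval n

def Unambiguous2 {α : Type} (M : ℕ → TwoNFA α) (L : PromiseFamily α) : Prop :=
  ∀ n, ∀ x ∈ L.valid n, ((M n).accPaths x).Subsingleton

def AcceptFew2 {α : Type} (M : ℕ → TwoNFA α) (L : PromiseFamily α) : Prop :=
  ∃ P : MvPolynomial (Fin 2) ℕ, ∀ n, ∀ x ∈ L.valid n,
    ((M n).accPaths x).encard ≤ (MvPolynomial.eval ![n, x.length] P : ℕ∞)

def WeaklyUnambiguous2 {α : Type} (M : ℕ → TwoNFA α) (L : PromiseFamily α) : Prop :=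
  ∀ n, ∀ x ∈ L.valid n, ∀ conf : (M n).Q × ℕ, conf.1 ∈ (M n).acc →
    ((M n).compPathsTo x conf).Subsingleton

def ReachUnambiguous2 {α : Type} (M : ℕ → TwoNFA α) (L : PromiseFamily α) : Prop :=
  ∀ n, ∀ x ∈ L.valid n, ∀ conf : (M n).Q × ℕ,
    ((M n).partialPathsTo x conf).Subsingleton

def ReachFew2 {α : Type} (M : ℕ → TwoNFA α) (L : PromiseFamily α) : Prop :=
  ∃ P : MvPolynomial (Fin 2) ℕ, ∀ n, ∀ x ∈ L.valid n, ∀ conf : (M n).Q × ℕ,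
    ((M n).partialPathsTo x conf).encard ≤ (MvPolynomial.eval ![n, x.length] P : ℕ∞)

/-! ## Two-way nonuniform state complexity classes -/

def twoN : Set Family :=
  {F | ∃ M : ℕ → TwoNFA F.alph, PolySize2 M ∧ Solves2 M F.prob}

def twoD : Set Family :=
  {F | ∃ M : ℕ → TwoNFA F.alph, PolySize2 M ∧ (∀ n, (M n).Deterministic) ∧ Solves2 M F.prob}

def twoU : Set Family :=
  {F | ∃ M : ℕ → TwoNFA F.alph, PolySize2 M ∧ Unambiguous2 M F.prob ∧ Solves2 M F.prob}

def twoFew : Set Family :=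
  {F | ∃ M : ℕ → TwoNFA F.alph, PolySize2 M ∧ AcceptFew2 M F.prob ∧ Solves2 M F.prob}

def twoFewU : Set Family :=
  {F | ∃ M : ℕ → TwoNFA F.alph, PolySize2 M ∧ AcceptFew2 M F.prob ∧
        WeaklyUnambiguous2 M F.prob ∧ Solves2 M F.prob}

def twoReachU : Set Family :=
  {F | ∃ M : ℕ → TwoNFA F.alph, PolySize2 M ∧ AcceptFew2 M F.prob ∧
        ReachUnambiguous2 M F.prob ∧ Solves2 M F.prob}

def twoReachFew : Set Family :=
  {F | ∃ M : ℕ → TwoNFA F.alph, PolySize2 M ∧ AcceptFew2 M F.prob ∧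
        ReachFew2 M F.prob ∧ Solves2 M F.prob}

def twoReachFewU : Set Family :=
  {F | ∃ M : ℕ → TwoNFA F.alph, PolySize2 M ∧ AcceptFew2 M F.prob ∧
        ReachFew2 M F.prob ∧ WeaklyUnambiguous2 M F.prob ∧ Solves2 M F.prob}

/-! ## Ceilings -/

/-- The family `F` has an `f(n)`-ceiling. -/
def HasCeiling (F : Family) (f : ℕ → ℕ) : Prop :=
  ∀ n, ∀ x ∈ F.prob.valid n, x.length ≤ f n

/-- The restriction `C/F` of a class `C` to families having an `f`-ceiling for some `f ∈ S`. -/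
def ceil (C : Set Family) (S : Set (ℕ → ℕ)) : Set Family :=
  {F | F ∈ C ∧ ∃ f ∈ S, HasCeiling F f}

def polyFuns : Set (ℕ → ℕ) := {f | ∃ p : Polynomial ℕ, ∀ n, f n = p.eval n}

/-- Super-exponential functions: `f(n) > 2^{p(n)}` for all but finitely many `n`,
for every polynomial `p`. -/
def supexpFuns : Set (ℕ → ℕ) :=
  {f | ∀ p : Polynomial ℕ, ∃ N, ∀ n ≥ N, 2 ^ p.eval n < f n}

/-- `F` has a logarithmic ceiling `ℓ(n) = a·log₂ n + b` with constants `a, b ≥ 0`. -/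
def HasLogCeiling (F : Family) : Prop :=
  ∃ a b : ℝ, 0 ≤ a ∧ 0 ≤ b ∧
    ∀ n, ∀ x ∈ F.prob.valid n, (x.length : ℝ) ≤ a * Real.logb 2 n + b

/-- The restriction `C/log` of a class `C` to families having logarithmic ceilings. -/
def ceilLog (C : Set Family) : Set Family := {F | F ∈ C ∧ HasLogCeiling F}
/-! ## The alphabet `{0, 1, #}` and encodings -/

inductive Sym3 : Type
  | zero | one | hash
deriving DecidableEq

instance : Fintype Sym3 :=
  ⟨{Sym3.zero, Sym3.one, Sym3.hash}, by intro x; cases x <;> simp⟩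

/-- The block `1^i 0^{m-i}`. -/
def block (m i : ℕ) : List Sym3 :=
  List.replicate i Sym3.one ++ List.replicate (m - i) Sym3.zero

lemma block_length {m i : ℕ} (h : i ≤ m) : (block m i).length = m := by
  simp [block]; omega

lemma block_count {m : ℕ} (i : ℕ) : (block m i).count Sym3.one = i := by
  simp [block, List.count_append, List.count_replicate]

lemma block_inj {m i j : ℕ} (h : block m i = block m j) : i = j := by
  have := block_count (m := m) i
  rw [h, block_count] at this
  omega

/-- The encoding `[[i₁,…,i_k]]_m` of a list of numbers. -/
def enc (m : ℕ) : List ℕ → List Sym3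
  | [] => []
  | [i] => block m i
  | i :: j :: rest => block m i ++ Sym3.zero :: enc m (j :: rest)

/-- Lists of length `k` with entries in `[n]`. -/
def ValidList (n k : ℕ) (l : List ℕ) : Prop :=
  l.length = k ∧ ∀ i ∈ l, 1 ≤ i ∧ i ≤ n

lemma enc_length {m : ℕ} :
    ∀ l : List ℕ, (∀ i ∈ l, i ≤ m) → (enc m l).length = l.length * (m + 1) - 1
  | [] => by simp [enc]
  | [i] => by
      intro h
      simp [enc, block_length (h i (by simp))]
  | i :: j :: rest => by
      intro h
      have ih := enc_length (j :: rest) (fun a ha => h a (List.mem_cons_of_mem _ ha))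
      have hb : (block m i).length = m := block_length (h i (List.mem_cons_self))
      show (block m i ++ Sym3.zero :: enc m (j :: rest)).length = _
      rw [List.length_append, hb, List.length_cons, ih]
      have hc : (i :: j :: rest).length = (j :: rest).length + 1 := by simp
      rw [hc]
      set L := (j :: rest).length with hLdef
      have hL : 1 ≤ L := by simp [hLdef]
      have h1 : (L + 1) * (m + 1) = L * (m + 1) + (m + 1) := by ring
      rw [h1]
      set P := L * (m + 1) with hPdef
      have hP : 1 ≤ P := by
        have := Nat.mul_le_mul hL (Nat.le_add_left 1 m)
        simpa [hPdef] using this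
      omega

lemma enc_ne_nil {m : ℕ} (i : ℕ) (rest : List ℕ) (hi : 1 ≤ i) :
    enc m (i :: rest) ≠ [] := by
  cases rest with
  | nil =>
      simp only [enc, block]
      intro h
      have := congrArg List.length h
      simp at this
      omega
  | cons j rest' =>
      simp only [enc]
      intro h
      have := congrArg List.length h
      simp at this

lemma enc_inj {m : ℕ} :
    ∀ u w : List ℕ, (∀ i ∈ u, 1 ≤ i ∧ i ≤ m) → (∀ i ∈ w, 1 ≤ i ∧ i ≤ m) →
      enc m u = enc m w → u = w
  | [], [], _, _, _ => rfl
  | [], j :: w', _, hw, h => by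
      exact absurd h.symm (enc_ne_nil j w' (hw j (by simp)).1)
  | i :: u', [], hu, _, h => by
      exact absurd h (enc_ne_nil i u' (hu i (by simp)).1)
  | [i], [j], hu, hw, h => by
      simp only [enc] at h
      rw [block_inj h]
  | [i], j :: b :: w', hu, hw, h => by
      exfalso
      have hl := congrArg List.length h
      rw [show enc m [i] = block m i from rfl,
        show enc m (j :: b :: w') = block m j ++ Sym3.zero :: enc m (b :: w') from rfl] at hl
      rw [List.length_append, List.length_cons,
        block_length (hu i (by simp)).2, block_length (hw j (by simp)).2] at hl
      omega
  | i :: a :: u', [j], hu, hw, h => by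
      exfalso
      have hl := congrArg List.length h
      rw [show enc m [j] = block m j from rfl,
        show enc m (i :: a :: u') = block m i ++ Sym3.zero :: enc m (a :: u') from rfl] at hl
      rw [List.length_append, List.length_cons,
        block_length (hu i (by simp)).2, block_length (hw j (by simp)).2] at hl
      omega
  | i :: a :: u', j :: b :: w', hu, hw, h => by
      rw [show enc m (i :: a :: u') = block m i ++ Sym3.zero :: enc m (a :: u') from rfl,
        show enc m (j :: b :: w') = block m j ++ Sym3.zero :: enc m (b :: w') from rfl] at h
      have hlen : (block m i).length = (block m j).length := by
        rw [block_length (hu i (by simp)).2, block_length (hw j (by simp)).2]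
      obtain ⟨h1, h2⟩ := List.append_inj h hlen
      have h3 : enc m (a :: u') = enc m (b :: w') := by
        simpa using h2
      have ih := enc_inj (a :: u') (b :: w')
        (fun x hx => hu x (List.mem_cons_of_mem _ hx))
        (fun x hx => hw x (List.mem_cons_of_mem _ hx)) h3
      rw [block_inj h1, ih]
/-! ## The promise problem family `L₁` -/

def L1pos (n : ℕ) : Set (List Sym3) :=
  {x | ∃ u v : List ℕ, ValidList n n u ∧ ValidList n n v ∧ u ≠ v ∧
        x = enc n u ++ Sym3.hash :: enc n v}

def L1neg (n : ℕ) : Set (List Sym3) :=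
  {x | ∃ u v : List ℕ, ValidList n n u ∧ ValidList n n v ∧ u = v ∧
        x = enc n u ++ Sym3.hash :: enc n v}

lemma L1_disj (n : ℕ) : Disjoint (L1pos n) (L1neg n) := by
  rw [Set.disjoint_left]
  rintro x ⟨u, v, hu, hv, huv, rfl⟩ ⟨u', v', hu', hv', huv', heq⟩
  have hlen : (enc n u).length = (enc n u').length := by
    rw [enc_length u (fun i hi => (hu.2 i hi).2),
      enc_length u' (fun i hi => (hu'.2 i hi).2), hu.1, hu'.1]
  obtain ⟨h1, h2⟩ := List.append_inj heq hlen
  have h2' : enc n v = enc n v' := by simpa using h2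
  have e1 : u = u' := enc_inj u u' hu.2 hu'.2 h1
  have e2 : v = v' := enc_inj v v' hv.2 hv'.2 h2'
  exact huv (by rw [e1, e2, huv'])

def L1prob : PromiseFamily Sym3 := ⟨L1pos, L1neg, L1_disj⟩

def L1fam : Family := { alph := Sym3, prob := L1prob }

/-! ## Matrices, their encodings, and the promise problem family `L₂` -/

/-- `R` represents an `n × n` matrix with entries in `[n]`, given as its list of rows. -/
def ValidMat (n : ℕ) (R : List (List ℕ)) : Prop :=
  R.length = n ∧ ∀ r ∈ R, ValidList n n r

/-- The encoding `[[D]]_n` of a matrix: its encoded rows joined by `#`. -/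
def encMat (n : ℕ) : List (List ℕ) → List Sym3
  | [] => []
  | [r] => enc n r
  | r :: s :: rest => enc n r ++ Sym3.hash :: encMat n (s :: rest)

lemma encMat_len {n : ℕ} :
    ∀ R : List (List ℕ), (∀ r ∈ R, ValidList n n r) →
      (encMat n R).length = R.length * (n * (n + 1) - 1 + 1) - 1
  | [] => by simp [encMat]
  | [r] => by
      intro h
      have hr := h r (by simp)
      have he : (enc n r).length = n * (n + 1) - 1 := by
        rw [enc_length r (fun i hi => (hr.2 i hi).2), hr.1]
      show (enc n r).length = ([r] : List (List ℕ)).length * (n * (n + 1) - 1 + 1) - 1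
      rw [he, show ([r] : List (List ℕ)).length = 1 from rfl]
      omega
  | r :: s :: rest => by
      intro h
      have ih := encMat_len (s :: rest) (fun a ha => h a (List.mem_cons_of_mem _ ha))
      have hr := h r (by simp)
      have he : (enc n r).length = n * (n + 1) - 1 := by
        rw [enc_length r (fun i hi => (hr.2 i hi).2), hr.1]
      show (enc n r ++ Sym3.hash :: encMat n (s :: rest)).length = _
      rw [List.length_append, he, List.length_cons, ih]
      have hc : (r :: s :: rest).length = (s :: rest).length + 1 := by simp
      rw [hc]
      set e := n * (n + 1) - 1 with hedef
      set L := (s :: rest).length with hLdef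
      have hL : 1 ≤ L := by simp [hLdef]
      have h1 : (L + 1) * (e + 1) = L * (e + 1) + (e + 1) := by ring
      rw [h1]
      set P := L * (e + 1) with hPdef
      have hP : 1 ≤ P := by
        calc 1 = 1 * 1 := by ring
        _ ≤ L * (e + 1) := Nat.mul_le_mul hL (by omega)
      omega

lemma encMat_inj {n : ℕ} :
    ∀ R W : List (List ℕ), (∀ r ∈ R, ValidList n n r) → (∀ r ∈ W, ValidList n n r) →
      R.length = W.length → encMat n R = encMat n W → R = W
  | [], [], _, _, _, _ => rfl
  | [], _ :: _, _, _, hl, _ => by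
      simp only [List.length_cons, List.length_nil] at hl
      omega
  | _ :: _, [], _, _, hl, _ => by
      simp only [List.length_cons, List.length_nil] at hl
      omega
  | [r], [w], hR, hW, _, h => by
      have := enc_inj r w (hR r (by simp)).2 (hW w (by simp)).2 h
      rw [this]
  | [r], w :: w' :: W', _, _, hl, _ => by
      simp only [List.length_cons, List.length_nil] at hl
      omega
  | r :: r' :: R', [w], _, _, hl, _ => by
      simp only [List.length_cons, List.length_nil] at hl
      omega
  | r :: r' :: R', w :: w' :: W', hR, hW, hl, h => by
      rw [show encMat n (r :: r' :: R') = enc n r ++ Sym3.hash :: encMat n (r' :: R') from rfl,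
        show encMat n (w :: w' :: W') = enc n w ++ Sym3.hash :: encMat n (w' :: W') from rfl] at h
      have hrlen : (enc n r).length = (enc n w).length := by
        have h1 := hR r (by simp); have h2 := hW w (by simp)
        rw [enc_length r (fun i hi => (h1.2 i hi).2),
          enc_length w (fun i hi => (h2.2 i hi).2), h1.1, h2.1]
      obtain ⟨h1, h2⟩ := List.append_inj h hrlen
      have h3 : encMat n (r' :: R') = encMat n (w' :: W') := by simpa using h2
      have ihr := enc_inj r w (hR r (by simp)).2 (hW w (by simp)).2 h1
      have ih := encMat_inj (r' :: R') (w' :: W')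
        (fun a ha => hR a (List.mem_cons_of_mem _ ha))
        (fun a ha => hW a (List.mem_cons_of_mem _ ha))
        (by simpa using hl) h3
      rw [ihr, ih]

/-- `SelSum R s` holds iff `s` is obtained by choosing one entry from each row of `R`
(the value `sum_D(σ)` for some choice function `σ`). -/
inductive SelSum : List (List ℕ) → ℕ → Prop
  | nil : SelSum [] 0
  | cons {a : ℕ} {r : List ℕ} {rest : List (List ℕ)} {s : ℕ} :
      a ∈ r → SelSum rest s → SelSum (r :: rest) (a + s)

def L2pos (n : ℕ) : Set (List Sym3) :=
  {x | ∃ R R' : List (List ℕ), ValidMat n R ∧ ValidMat n R' ∧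
        (∃ s : ℕ, SelSum R s ∧ SelSum R' s) ∧
        x = encMat n R ++ Sym3.hash :: Sym3.hash :: encMat n R'}

def L2neg (n : ℕ) : Set (List Sym3) :=
  {x | ∃ R R' : List (List ℕ), ValidMat n R ∧ ValidMat n R' ∧
        (∀ s s' : ℕ, SelSum R s → SelSum R' s' → s ≠ s') ∧
        x = encMat n R ++ Sym3.hash :: Sym3.hash :: encMat n R'}

lemma L2_disj (n : ℕ) : Disjoint (L2pos n) (L2neg n) := by
  rw [Set.disjoint_left]
  rintro x ⟨R, R', hR, hR', ⟨s, hs, hs'⟩, rfl⟩ ⟨W, W', hW, hW', hne, heq⟩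
  have hlen : (encMat n R).length = (encMat n W).length := by
    rw [encMat_len R hR.2, encMat_len W hW.2, hR.1, hW.1]
  obtain ⟨h1, h2⟩ := List.append_inj heq hlen
  have h2' : encMat n R' = encMat n W' := by simpa using h2
  have e1 : R = W := encMat_inj R W hR.2 hW.2 (by rw [hR.1, hW.1]) h1
  have e2 : R' = W' := encMat_inj R' W' hR'.2 hW'.2 (by rw [hR'.1, hW'.1]) h2'
  exact hne s s (e1 ▸ hs) (e2 ▸ hs') rfl

def L2prob : PromiseFamily Sym3 := ⟨L2pos, L2neg, L2_disj⟩

def L2fam : Family := { alph := Sym3, prob := L2prob }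
/-! ## One-way probabilistic finite automata data -/

/-- Product of the matrices of the symbols of a word. -/
noncomputable def wordMatrix {α Q : Type} [Fintype Q] [DecidableEq Q]
    (Mσ : TapeSym α → Matrix Q Q ℝ) (w : List (TapeSym α)) : Matrix Q Q ℝ :=
  (w.map Mσ).prod

/-- The tape word `▷ x ◁`. -/
def tapeWord {α : Type} (x : List α) : List (TapeSym α) :=
  Sum.inr false :: (x.map Sum.inl ++ [Sum.inr true])

/-- `p_{acc}(x : q)`: the `q`-entry of the row vector `ν · M_{▷x◁}`. -/
noncomputable def pacc {α Q : Type} [Fintype Q] [DecidableEq Q]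
    (ν : Q → ℝ) (Mσ : TapeSym α → Matrix Q Q ℝ) (x : List α) (q : Q) : ℝ :=
  Matrix.vecMul ν (wordMatrix Mσ (tapeWord x)) q

/-!
Let `F_n` separate the words `uv` with `u ≠ v` from the words `uu`, where `|u| = |v| = n`.
A 1nfa with `O(n²)` states solves `F_n` by guessing a position `j < n`, remembering `u_j` and
checking `v_j ≠ u_j`. Its state carries a position counter and the guess, so every computation
path is determined by its last state: the machine is reach-unambiguous, hence also weakly
unambiguous and accept-few, and `F` lies in all four classes. For the complement, the pairs
`(u, u)` form a fooling set of size `2ⁿ`, so no polynomial-size family of 1nfa's solves `co-F`.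
-/

theorem Polynomial.eval_le_eval_one_mul_pow (p : Polynomial ℕ) {n : ℕ} (hn : 1 ≤ n) :
    p.eval n ≤ p.eval 1 * n ^ p.natDegree := by
  simp only [Polynomial.eval_eq_sum_range, one_pow, mul_one, Finset.sum_mul]
  exact Finset.sum_le_sum fun i hi =>
    Nat.mul_le_mul_left _ (Nat.pow_le_pow_right hn (Nat.lt_succ_iff.mp (Finset.mem_range.mp hi)))

open Filter Topology in
theorem Polynomial.eventually_eval_lt_two_pow (p : Polynomial ℕ) :
    ∀ᶠ n in atTop, p.eval n < 2 ^ n := by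
  set C : ℕ := p.eval 1
  have hlim : Tendsto (fun n : ℕ => ((C : ℝ) + 1) * ((n : ℝ) ^ p.natDegree / 2 ^ n)) atTop
      (𝓝 0) := by
    simpa using (tendsto_pow_const_div_const_pow_of_one_lt p.natDegree one_lt_two).const_mul
      ((C : ℝ) + 1)
  filter_upwards [hlim.eventually (gt_mem_nhds one_pos), eventually_ge_atTop 1] with n hlt hn
  have hpow : (C + 1) * n ^ p.natDegree < 2 ^ n := by
    rw [mul_div_assoc', div_lt_one (by positivity)] at hlt
    exact_mod_cast hlt
  calc p.eval n ≤ C * n ^ p.natDegree := p.eval_le_eval_one_mul_pow hn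
    _ ≤ (C + 1) * n ^ p.natDegree := by gcongr; omega
    _ < 2 ^ n := hpow

theorem NFA.mem_acceptsFrom_iff_exists {α σ : Type*} {M : NFA α σ} {S : Set σ} {x : List α} :
    x ∈ M.acceptsFrom S ↔ ∃ s ∈ S, x ∈ M.acceptsFrom {s} := by
  simp only [NFA.mem_acceptsFrom, NFA.mem_evalFrom_iff_exists (S := S)]
  tauto

theorem NFA.card_le_card_of_fooling {α σ ι : Type*} [Fintype σ] [Fintype ι] (M : NFA α σ)
    (u v : ι → List α) (hacc : ∀ i, u i ++ v i ∈ M.accepts)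
    (hrej : ∀ i j, i ≠ j → u i ++ v j ∉ M.accepts) :
    Fintype.card ι ≤ Fintype.card σ := by
  simp only [NFA.accepts_eq_acceptsFrom_start, NFA.append_mem_acceptsFrom] at hacc hrej
  choose s hs hsv using fun i => NFA.mem_acceptsFrom_iff_exists.mp (hacc i)
  refine Fintype.card_le_of_injective s fun i j hij => by_contra fun hne => hrej i j hne ?_
  exact NFA.mem_acceptsFrom_iff_exists.mpr ⟨s i, hs i, hij ▸ hsv j⟩

namespace OneNFA

variable {α : Type} (M : OneNFA α)

@[simps]
def toNFA : NFA α M.Q := ⟨M.next, {M.start}, M.acc⟩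

theorem mem_toNFA_evalFrom_singleton_iff {s q : M.Q} {x : List α} :
    q ∈ M.toNFA.evalFrom {s} x ↔ ∃ p : Fin (x.length + 1) → M.Q, p 0 = s ∧
      (∀ i : Fin x.length, p i.succ ∈ M.next (p i.castSucc) (x.get i)) ∧
        p (Fin.last x.length) = q := by
  induction x generalizing s with
  | nil =>
    refine ⟨fun h => ⟨fun _ => s, rfl, fun i => i.elim0, h.symm⟩, ?_⟩
    rintro ⟨p, rfl, -, rfl⟩
    rfl
  | cons a x ih =>
    rw [NFA.evalFrom_cons, NFA.stepSet_singleton, NFA.mem_evalFrom_iff_exists]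
    constructor
    · rintro ⟨t, ht, hq⟩
      obtain ⟨p, rfl, hp, rfl⟩ := ih.mp hq
      refine ⟨Fin.cons s p, rfl, Fin.cases ht fun i => ?_, rfl⟩
      simpa [← Fin.succ_castSucc] using hp i
    · rintro ⟨p, rfl, hp, rfl⟩
      refine ⟨p 1, hp 0, ih.mpr ⟨Fin.tail p, rfl, fun i => ?_, rfl⟩⟩
      have := hp i.succ
      rwa [← Fin.succ_castSucc] at this

theorem accepts_iff_mem_toNFA_accepts {x : List α} : M.Accepts x ↔ x ∈ M.toNFA.accepts := by
  simp only [NFA.mem_accepts, toNFA_start, toNFA_accept, M.mem_toNFA_evalFrom_singleton_iff]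
  constructor
  · rintro ⟨p, ⟨hp0, hp⟩, hacc⟩
    exact ⟨_, hacc, p, hp0, hp, rfl⟩
  · rintro ⟨_, hacc, p, hp0, hp, rfl⟩
    exact ⟨p, ⟨hp0, hp⟩, hacc⟩

theorem card_le_sc_of_fooling {ι : Type*} [Fintype ι] (u v : ι → List α)
    (hacc : ∀ i, M.Accepts (u i ++ v i)) (hrej : ∀ i j, i ≠ j → ¬ M.Accepts (u i ++ v j)) :
    Fintype.card ι ≤ M.sc := by
  simp only [accepts_iff_mem_toNFA_accepts] at hacc hrej
  exact M.toNFA.card_le_card_of_fooling u v hacc hrej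

def IsReachUnambiguous : Prop :=
  ∀ ⦃x : List α⦄ ⦃p p' : Fin (x.length + 1) → M.Q⦄, M.IsPath x p → M.IsPath x p' →
    p (Fin.last x.length) = p' (Fin.last x.length) → p = p'

variable {M}

theorem IsReachUnambiguous.ncard_accPaths_le (h : M.IsReachUnambiguous) (x : List α) :
    {p | M.IsAccPath x p}.ncard ≤ M.sc :=
  calc {p | M.IsAccPath x p}.ncard ≤ (Set.univ : Set M.Q).ncard :=
        Set.ncard_le_ncard_of_injOn (fun p => p (Fin.last _)) (fun _ _ => trivial)
          fun _ hp _ hp' => h hp.1 hp'.1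
    _ = M.sc := by rw [Set.ncard_univ, Nat.card_eq_fintype_card]; rfl

end OneNFA

section Families

variable {α : Type} {M : ℕ → OneNFA α} {L : PromiseFamily α}

theorem not_polySize1_of_two_pow_le (h : ∀ n, 2 ^ n ≤ (M n).sc) : ¬ PolySize1 M := by
  rintro ⟨p, hp⟩
  obtain ⟨n, hn⟩ := p.eventually_eval_lt_two_pow.exists
  exact ((h n).trans (hp n)).not_gt hn

theorem ReachUnambiguous1.reachFew1 (h : ReachUnambiguous1 M L) : ReachFew1 M L :=
  ⟨1, fun n x hx i hi q => by
    simpa using Set.ncard_le_one_iff_subsingleton.mpr (h n x hx i hi q)⟩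

theorem reachUnambiguous1_of_isReachUnambiguous (hR : ∀ n, (M n).IsReachUnambiguous) :
    ReachUnambiguous1 M L :=
  fun n _ _ _ _ _ _ hp _ hp' => hR n hp.1 hp'.1 (hp.2.trans hp'.2.symm)

theorem weaklyUnambiguous1_of_isReachUnambiguous (hR : ∀ n, (M n).IsReachUnambiguous) :
    WeaklyUnambiguous1 M L :=
  fun n _ _ _ _ hp _ hp' => hR n hp.1.1 hp'.1.1 (hp.2.trans hp'.2.symm)

theorem acceptFew1_of_isReachUnambiguous (hM : PolySize1 M)
    (hR : ∀ n, (M n).IsReachUnambiguous) : AcceptFew1 M L := by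
  obtain ⟨p, hp⟩ := hM
  exact ⟨p.toMvPolynomial 0, fun n x _ => by
    simpa using ((hR n).ncard_accPaths_le x).trans (hp n)⟩

end Families

section Classes

variable {F : Family} {M : ℕ → OneNFA F.alph}

theorem mem_oneReachU_of_isReachUnambiguous (hM : PolySize1 M)
    (hR : ∀ n, (M n).IsReachUnambiguous) (hS : Solves1 M F.prob) : F ∈ oneReachU :=
  ⟨M, hM, acceptFew1_of_isReachUnambiguous hM hR,
    reachUnambiguous1_of_isReachUnambiguous hR, hS⟩

theorem mem_oneReachFewU_of_isReachUnambiguous (hM : PolySize1 M)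
    (hR : ∀ n, (M n).IsReachUnambiguous) (hS : Solves1 M F.prob) : F ∈ oneReachFewU :=
  ⟨M, hM, acceptFew1_of_isReachUnambiguous hM hR,
    (reachUnambiguous1_of_isReachUnambiguous hR).reachFew1,
    weaklyUnambiguous1_of_isReachUnambiguous hR, hS⟩

theorem mem_oneFewU_of_isReachUnambiguous (hM : PolySize1 M)
    (hR : ∀ n, (M n).IsReachUnambiguous) (hS : Solves1 M F.prob) : F ∈ oneFewU :=
  ⟨M, hM, acceptFew1_of_isReachUnambiguous hM hR,
    weaklyUnambiguous1_of_isReachUnambiguous hR, hS⟩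

theorem mem_oneFew_of_isReachUnambiguous (hM : PolySize1 M)
    (hR : ∀ n, (M n).IsReachUnambiguous) (hS : Solves1 M F.prob) : F ∈ oneFew :=
  ⟨M, hM, acceptFew1_of_isReachUnambiguous hM hR, hS⟩

end Classes

theorem oneReachU_subset_oneN : oneReachU ⊆ oneN := fun _ ⟨M, hM, _, _, hS⟩ => ⟨M, hM, hS⟩

theorem oneReachFewU_subset_oneN : oneReachFewU ⊆ oneN :=
  fun _ ⟨M, hM, _, _, _, hS⟩ => ⟨M, hM, hS⟩

theorem oneFewU_subset_oneN : oneFewU ⊆ oneN := fun _ ⟨M, hM, _, _, hS⟩ => ⟨M, hM, hS⟩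

theorem oneFew_subset_oneN : oneFew ⊆ oneN := fun _ ⟨M, hM, _, hS⟩ => ⟨M, hM, hS⟩

theorem ne_coC_of_mem_of_co_not_mem_oneN {C : Set Family} {F : Family} (hF : F ∈ C)
    (hC : C ⊆ oneN) (hco : F.co ∉ oneN) : C ≠ coC C :=
  fun h => hco (hC (show F ∈ coC C from h ▸ hF))

namespace DistinctHalves

/- A state `(i, d)` of `machine n` counts in `i` the letters read so far (saturating at `2 * n`);
`d = some (j, b, c)` records the guessed position `j`, the bit `b` read there, and whether a letter
different from `b` has been read at position `n + j`. -/
abbrev State (n : ℕ) : Type := Fin (2 * n + 1) × Option (Fin n × Bool × Bool)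

def clip (n k : ℕ) : Fin (2 * n + 1) := ⟨min k (2 * n), by omega⟩

inductive Step (n : ℕ) : State n → Bool → State n → Prop
  | wait (i : Fin (2 * n + 1)) (a : Bool) : Step n (i, none) a (clip n (i + 1), none)
  | guess (j : Fin n) (a : Bool) : Step n (clip n j, none) a (clip n (j + 1), some (j, a, false))
  | check (i : Fin (2 * n + 1)) (j : Fin n) (b c a : Bool) :
      Step n (i, some (j, b, c)) a
        (clip n (i + 1), some (j, b, c || decide (i.val = n + j.val ∧ a ≠ b)))

def machine (n : ℕ) : OneNFA Bool where
  Q := State n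
  start := (clip n 0, none)
  next q a := {q' | Step n q a q'}
  next_nonempty := by
    rintro ⟨i, _ | ⟨j, b, c⟩⟩ a
    exacts [⟨_, .wait i a⟩, ⟨_, .check i j b c a⟩]
  acc := {q | ∃ j b, q.2 = some (j, b, true)}

variable {n : ℕ}

def guessData (y : List Bool) : Option (Fin n) → ℕ → Option (Fin n × Bool × Bool)
  | none, _ => none
  | some j, k =>
    if j.val < k then
      some (j, y.getD j false,
        decide (n + j.val < k ∧ y.getD (n + j.val) false ≠ y.getD j false))
    else none

/-- The computation path that guesses position `j` if `g = some j` and never guesses if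
`g = none`. -/
def guessRun (y : List Bool) (g : Option (Fin n)) (k : ℕ) : State n :=
  (clip n k, guessData y g k)

theorem clip_clip_add_one (k : ℕ) : clip n (clip n k + 1) = clip n (k + 1) := by
  ext; simp only [clip]; omega

theorem clip_val_eq_iff {k m : ℕ} (hm : m < 2 * n) : (clip n k).val = m ↔ k = m := by
  simp only [clip]; omega

theorem step_guessRun (y : List Bool) (g : Option (Fin n)) (k : ℕ) :
    Step n (guessRun y g k) (y.getD k false) (guessRun y g (k + 1)) := by
  rcases g with _ | j
  · have := Step.wait (clip n k) (y.getD k false)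
    rwa [clip_clip_add_one] at this
  rcases lt_trichotomy j.val k with h | rfl | h
  · have := Step.check (clip n k) j (y.getD j false)
      (decide (n + j.val < k ∧ y.getD (n + j.val) false ≠ y.getD j false)) (y.getD k false)
    simp only [clip_clip_add_one, clip_val_eq_iff (show n + j.val < 2 * n by omega)] at this
    simp only [guessRun, guessData, if_pos h, if_pos (h.trans k.lt_succ_self)]
    convert this using 5
    by_cases hk : k = n + j.val
    · subst hk
      simp
    · have : n + j.val < k + 1 ↔ n + j.val < k := by omega
      simp [hk, this]
  · have hn : ¬ n + j.val < j.val + 1 := by omega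
    simpa [guessRun, guessData, hn] using Step.guess j (y.getD j false)
  · have := Step.wait (clip n k) (y.getD k false)
    rw [clip_clip_add_one] at this
    simpa [guessRun, guessData, h.not_gt, show ¬ j.val < k + 1 by omega] using this

theorem step_some_iff {i : Fin (2 * n + 1)} {j : Fin n} {b c a : Bool} {q : State n} :
    Step n (i, some (j, b, c)) a q ↔
      q = (clip n (i + 1), some (j, b, c || decide (i.val = n + j.val ∧ a ≠ b))) :=
  ⟨fun h => by cases h; rfl, fun h => h ▸ .check i j b c a⟩

theorem guessData_eq_none_of_le {y : List Bool} {g : Option (Fin n)} {i k : ℕ}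
    (h : guessData y g k = none) (hi : i ≤ k) : guessData y g i = none := by
  rcases g with _ | j
  · rfl
  · simp only [guessData, ite_eq_right_iff, reduceCtorEq, imp_false, not_lt] at h ⊢
    omega

theorem exists_guessRun_of_step {y : List Bool} {g : Option (Fin n)} {k : ℕ}
    {q : State n} (h : Step n (guessRun y g k) (y.getD k false) q) :
    ∃ g', (∀ i ≤ k, guessRun y g' i = guessRun y g i) ∧ q = guessRun y g' (k + 1) := by
  generalize hs : guessRun y g k = s at h
  cases h with
  | wait i a =>
    obtain ⟨rfl, hnone⟩ := Prod.mk.inj hs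
    refine ⟨none, fun i hi => ?_, by rw [clip_clip_add_one]; rfl⟩
    rw [guessRun, guessRun, guessData_eq_none_of_le hnone hi]
    rfl
  | guess j a =>
    obtain ⟨hk, hnone⟩ := Prod.mk.inj hs
    have hkj : k = j := by
      have := congrArg Fin.val hk
      simp only [clip] at this
      omega
    subst hkj
    refine ⟨some j, fun i hi => ?_, ?_⟩
    · rw [guessRun, guessRun, guessData_eq_none_of_le hnone hi]
      simp [guessData, hi.not_gt]
    · simp [guessRun, guessData, j.pos.ne']
  | check i j b c a =>
    obtain ⟨rfl, hsome⟩ := Prod.mk.inj hs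
    refine ⟨g, fun _ _ => rfl, ?_⟩
    have := step_guessRun y g k
    rw [guessRun, hsome, step_some_iff] at this
    exact this.symm

theorem isPath_guessRun (y : List Bool) (g : Option (Fin n)) :
    (machine n).IsPath y fun k => guessRun y g k := by
  refine ⟨?_, fun i => ?_⟩
  · rcases g with _ | j <;> rfl
  · have := step_guessRun y g i
    rwa [List.getD_eq_getElem _ _ i.isLt] at this

theorem exists_guessRun_of_isPath {y : List Bool} {p : Fin (y.length + 1) → State n}
    (hp : (machine n).IsPath y p) : ∃ g, ∀ k, p k = guessRun y g k := by
  suffices h : ∀ m : Fin (y.length + 1), ∃ g, ∀ k ≤ m, p k = guessRun y g k by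
    obtain ⟨g, hg⟩ := h (Fin.last _)
    exact ⟨g, fun k => hg k (Fin.le_last k)⟩
  intro m
  induction m using Fin.induction with
  | zero =>
    refine ⟨none, fun k hk => ?_⟩
    rw [Fin.le_zero_iff.mp hk, hp.1]
    rfl
  | succ m ih =>
    obtain ⟨g, hg⟩ := ih
    have hstep := hp.2 m
    rw [hg _ le_rfl, List.get_eq_getElem, ← List.getD_eq_getElem _ false] at hstep
    obtain ⟨g', hagree, hlast⟩ := exists_guessRun_of_step hstep
    refine ⟨g', fun k hk => ?_⟩
    rcases hk.lt_or_eq with hk | rfl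
    · have hk : k ≤ m.castSucc := Fin.le_castSucc_iff.mpr hk
      exact (hg k hk).trans (hagree k hk).symm
    · exact hlast

theorem eq_of_guessData_eq_some {y : List Bool} {g : Option (Fin n)} {k : ℕ}
    {j : Fin n} {b c : Bool} (h : guessData y g k = some (j, b, c)) : g = some j := by
  rcases g with _ | j'
  · cases h
  · simp only [guessData] at h
    split_ifs at h
    cases h
    rfl

theorem guessRun_eq_of_le {y : List Bool} {g g' : Option (Fin n)} {k m : ℕ}
    (h : guessRun y g m = guessRun y g' m) (hk : k ≤ m) : guessRun y g k = guessRun y g' k := by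
  obtain ⟨-, hd⟩ := Prod.mk.inj h
  rcases hm : guessData y g m with _ | ⟨j, b, c⟩
  · rw [guessRun, guessRun, guessData_eq_none_of_le hm hk,
      guessData_eq_none_of_le (hd.symm.trans hm) hk]
  · rw [eq_of_guessData_eq_some hm, eq_of_guessData_eq_some (hd.symm.trans hm)]

theorem isPath_eq_of_last_eq {y : List Bool} {p p' : Fin (y.length + 1) → State n}
    (hp : (machine n).IsPath y p) (hp' : (machine n).IsPath y p')
    (h : p (Fin.last _) = p' (Fin.last _)) : p = p' := by
  obtain ⟨g, hg⟩ := exists_guessRun_of_isPath hp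
  obtain ⟨g', hg'⟩ := exists_guessRun_of_isPath hp'
  rw [hg, hg'] at h
  funext k
  rw [hg, hg']
  exact guessRun_eq_of_le h (Fin.le_last k)

def pos (n : ℕ) : Set (List Bool) :=
  {x | ∃ u v : List Bool, u.length = n ∧ v.length = n ∧ u ≠ v ∧ x = u ++ v}

def neg (n : ℕ) : Set (List Bool) :=
  {x | ∃ u : List Bool, u.length = n ∧ x = u ++ u}

theorem disjoint_pos_neg (n : ℕ) : Disjoint (pos n) (neg n) := by
  rw [Set.disjoint_left]
  rintro _ ⟨u, v, hu, hv, hne, rfl⟩ ⟨w, hw, h⟩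
  obtain ⟨rfl, rfl⟩ := List.append_inj h (hu.trans hw.symm)
  exact hne rfl

def problem : PromiseFamily Bool := ⟨pos, neg, disjoint_pos_neg⟩

def family : Family := { alph := Bool, prob := problem }

theorem accepts_of_mem_pos {x : List Bool} (hx : x ∈ pos n) : (machine n).Accepts x := by
  obtain ⟨u, v, hu, hv, hne, rfl⟩ := hx
  obtain ⟨j, hj, hdiff⟩ : ∃ j < n, u.getD j false ≠ v.getD j false := by
    by_contra! h
    refine hne (List.ext_getElem (hu.trans hv.symm) fun j hju hjv => ?_)
    have := h j (hu ▸ hju)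
    rwa [List.getD_eq_getElem _ _ hju, List.getD_eq_getElem _ _ hjv] at this
  refine ⟨_, isPath_guessRun _ (some ⟨j, hj⟩), ⟨⟨j, hj⟩, u.getD j false, ?_⟩⟩
  have hfirst : (u ++ v).getD j false = u.getD j false := List.getD_append _ _ _ _ (by omega)
  have hsecond : (u ++ v).getD (n + j) false = v.getD j false := by
    rw [List.getD_append_right _ _ _ _ (by omega)]
    congr 1
    omega
  have hlen : (u ++ v).length = n + n := by simp [hu, hv]
  simp only [guessRun, guessData, Fin.val_last, hlen, hfirst, hsecond,
    if_pos (by omega : j < n + n), Option.some.injEq, Prod.mk.injEq, true_and, decide_eq_true_eq]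
  exact ⟨by omega, hdiff.symm⟩

theorem getD_ne_of_guessData_eq_some {y : List Bool} {g : Option (Fin n)} {k : ℕ}
    {j : Fin n} {b : Bool} (h : guessData y g k = some (j, b, true)) :
    y.getD (n + j) false ≠ y.getD j false := by
  rcases g with _ | j'
  · cases h
  · simp only [guessData] at h
    split_ifs at h
    simp only [Option.some.injEq, Prod.mk.injEq, decide_eq_true_eq] at h
    obtain ⟨rfl, -, -, hne⟩ := h
    exact hne

theorem not_accepts_of_mem_neg {x : List Bool} (hx : x ∈ neg n) :
    ¬ (machine n).Accepts x := by
  rintro ⟨p, hp, j, b, hacc⟩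
  obtain ⟨u, hu, rfl⟩ := hx
  obtain ⟨g, hg⟩ := exists_guessRun_of_isPath hp
  rw [hg] at hacc
  apply getD_ne_of_guessData_eq_some hacc
  rw [List.getD_append u u false j (by omega), List.getD_append_right u u false _ (by omega)]
  congr 1
  omega

theorem machine_isReachUnambiguous (n : ℕ) : (machine n).IsReachUnambiguous :=
  fun _ _ _ => isPath_eq_of_last_eq

theorem polySize1_machine : PolySize1 machine := by
  refine ⟨(2 * Polynomial.X + 1) * (4 * Polynomial.X + 1), fun n => le_of_eq ?_⟩
  show Fintype.card (State n) = _
  simp only [Fintype.card_prod, Fintype.card_fin, Fintype.card_option, Fintype.card_bool,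
    Polynomial.eval_mul, Polynomial.eval_add, Polynomial.eval_ofNat, Polynomial.eval_X,
    Polynomial.eval_one]
  ring

theorem solves1_machine : Solves1 machine problem :=
  fun _ => ⟨fun _ => accepts_of_mem_pos, fun _ => not_accepts_of_mem_neg⟩

theorem two_pow_le_sc_of_solves1_co {M : ℕ → OneNFA Bool} (h : Solves1 M problem.co) (n : ℕ) :
    2 ^ n ≤ (M n).sc := by
  simpa using (M n).card_le_sc_of_fooling (fun f : Fin n → Bool => List.ofFn f) (List.ofFn ·)
    (fun f => (h n).1 _ ⟨_, List.length_ofFn, rfl⟩)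
    fun f g hfg => (h n).2 _ ⟨_, _, List.length_ofFn, List.length_ofFn,
      fun e => hfg (List.ofFn_injective e), rfl⟩

theorem co_family_not_mem_oneN : family.co ∉ oneN :=
  fun ⟨_, hM, hS⟩ => not_polySize1_of_two_pow_le (two_pow_le_sc_of_solves1_co hS) hM

end DistinctHalves

/-- None of `1ReachU`, `1ReachFewU`, `1FewU`, `1Few` is closed under
complementation. -/
theorem non_closure_under_complementation :
    oneReachU ≠ coC oneReachU ∧ oneReachFewU ≠ coC oneReachFewU ∧
      oneFewU ≠ coC oneFewU ∧ oneFew ≠ coC oneFew := by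
  open DistinctHalves in
  have hM := polySize1_machine
  have hR := machine_isReachUnambiguous
  have hS : Solves1 machine family.prob := solves1_machine
  have hne {C : Set Family} (hF : family ∈ C) (hC : C ⊆ oneN) : C ≠ coC C :=
    ne_coC_of_mem_of_co_not_mem_oneN hF hC co_family_not_mem_oneN
  exact ⟨hne (mem_oneReachU_of_isReachUnambiguous hM hR hS) oneReachU_subset_oneN,
    hne (mem_oneReachFewU_of_isReachUnambiguous hM hR hS) oneReachFewU_subset_oneN,
    hne (mem_oneFewU_of_isReachUnambiguous hM hR hS) oneFewU_subset_oneN,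
    hne (mem_oneFew_of_isReachUnambiguous hM hR hS) oneFew_subset_oneN⟩
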